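/- arXiv:2401.09151 — 5 statements merged into one kernel-verified Lean document; each statement's English description precedes it below -/
import Mathlib

section
/- Let k be a commutative ring and H a coaugmented coalgebra over k. For every n ≥ 1 and every a ∈ H, the iterated comultiplication decomposes as Δ^{(n)}(a) = Σ_{S ⊆ {1,…,n}} (δ^{|S|}(a))_S, where for S = {m_1 < m_2 < ⋯ < m_k} ⊆ {1,…,n} the insertion map (−)_S : H^{⊗k} → H^{⊗n} is the k-linear map sending a_1 ⊗ ⋯ ⊗ a_k to the elementary tensor having a_j in the m_j-th tensor position and 1_H in all other positions. -/
open TensorProduct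

noncomputable section

universe u

variable (R : Type u) [CommRing R]

def Tpow (H : Type u) [AddCommGroup H] [Module R H] : ℕ → ModuleCat.{u} R
  | 0 => ModuleCat.of R R
  | n + 1 => ModuleCat.of R (H ⊗[R] (Tpow H n))

variable {R}
variable {H : Type u} [AddCommGroup H] [Module R H]

def iterComul (Δc : H →ₗ[R] H ⊗[R] H) (εc : H →ₗ[R] R) : (n : ℕ) → (H →ₗ[R] Tpow R H n)
  | 0 => εc
  | 1 => (TensorProduct.rid R H).symm.toLinearMap
  | n + 2 =>
      (TensorProduct.assoc R H H (Tpow R H n)).toLinearMap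
        ∘ₗ (LinearMap.rTensor (Tpow R H n) Δc)
        ∘ₗ (iterComul Δc εc (n + 1))

def mapPow (e : H →ₗ[R] H) : (n : ℕ) → (Tpow R H n →ₗ[R] Tpow R H n)
  | 0 => LinearMap.id
  | n + 1 => TensorProduct.map e (mapPow e n)

def eAug (εc : H →ₗ[R] R) (u : H) : H →ₗ[R] H :=
  LinearMap.id - (LinearMap.toSpanSingleton R H u) ∘ₗ εc

def deltaPow (Δc : H →ₗ[R] H ⊗[R] H) (εc : H →ₗ[R] R) (u : H) (n : ℕ) :
    H →ₗ[R] Tpow R H n :=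
  (mapPow (eAug εc u) n) ∘ₗ (iterComul Δc εc n)

/-- Transport along an equality of tensor power degrees. -/
def tpowCast {m n : ℕ} (h : m = n) : Tpow R H m →ₗ[R] Tpow R H n :=
  h ▸ LinearMap.id

theorem erase_zero_eq {n : ℕ} (S : Finset (Fin (n + 1))) :
    S.erase 0 = (S.preimage Fin.succ (Fin.succ_injective n).injOn).image Fin.succ := by
  ext j
  simp only [Finset.mem_image, Finset.mem_preimage, Finset.mem_erase]
  constructor
  · rintro ⟨hne, hj⟩
    exact ⟨j.pred hne, by simpa [Fin.succ_pred] using hj, Fin.succ_pred j hne⟩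
  · rintro ⟨i, hi, rfl⟩
    exact ⟨Fin.succ_ne_zero i, hi⟩

theorem card_preimage_succ {n : ℕ} (S : Finset (Fin (n + 1))) :
    (S.preimage Fin.succ (Fin.succ_injective n).injOn).card = (S.erase 0).card := by
  rw [erase_zero_eq S, Finset.card_image_of_injective _ (Fin.succ_injective n)]

/-- The insertion map `(−)_S : H^{⊗|S|} → H^{⊗n}` for a subset `S ⊆ {1,…,n}`:
it inserts the `j`-th tensor component into the position of the `j`-th element of `S`
(in increasing order) and puts `u = 1_H` in all other positions. -/
def insMap (u : H) : (n : ℕ) → (S : Finset (Fin n)) → (Tpow R H S.card →ₗ[R] Tpow R H n)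
  | 0, S => tpowCast (by simp [Finset.eq_empty_of_isEmpty S])
  | n + 1, S =>
    if h : (0 : Fin (n + 1)) ∈ S then
      (LinearMap.lTensor H
          (insMap u n (S.preimage Fin.succ (Fin.succ_injective n).injOn)))
        ∘ₗ tpowCast (m := S.card)
            (n := (S.preimage Fin.succ (Fin.succ_injective n).injOn).card + 1) (by
            have h1 := card_preimage_succ S
            have h2 := Finset.card_erase_of_mem h
            have h3 := Finset.card_pos.mpr ⟨(0 : Fin (n + 1)), h⟩
            omega)
    else
      (TensorProduct.mk R H (Tpow R H n) u)
        ∘ₗ (insMap u n (S.preimage Fin.succ (Fin.succ_injective n).injOn))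
        ∘ₗ tpowCast (m := S.card)
            (n := (S.preimage Fin.succ (Fin.succ_injective n).injOn).card) (by
            have h1 := card_preimage_succ S
            rw [Finset.erase_eq_of_notMem h] at h1
            omega)

/-! Write `id_H = e + η∘ε`, so that `id^{⊗n}` expands into a sum over subsets `S ⊆ {1,…,n}` of
the maps with `e` in the positions of `S` and `η∘ε` elsewhere. Precomposed with `Δ^{(n)}`, the
term of `S` is `(δ^{|S|})_S`: by coassociativity `Δ^{(n+1)} = (id ⊗ Δ^{(n)}) ∘ Δ`, and by
counitality `(η∘ε ⊗ g) ∘ Δ = 1_H ⊗ g`, which turns each factor `η∘ε` into an inserted `1_H`. -/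

theorem TensorProduct.assoc_comp_map_eq {M N P Q T : Type*} [AddCommMonoid M] [Module R M]
    [AddCommMonoid N] [Module R N] [AddCommMonoid P] [Module R P] [AddCommMonoid Q] [Module R Q]
    [AddCommMonoid T] [Module R T] (f : M →ₗ[R] P ⊗[R] Q) (g : N →ₗ[R] T) :
    (TensorProduct.assoc R P Q T).toLinearMap ∘ₗ map f g
      = LinearMap.lTensor P (LinearMap.lTensor Q g) ∘ₗ (TensorProduct.assoc R P Q N).toLinearMap
          ∘ₗ LinearMap.rTensor N f := by
  rw [LinearMap.lTensor, LinearMap.lTensor, ← LinearMap.comp_assoc, map_map_comp_assoc_eq,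
    LinearMap.comp_assoc, LinearMap.rTensor, ← map_comp, map_id, LinearMap.id_comp,
    LinearMap.comp_id]

def unitCounit (εc : H →ₗ[R] R) (u : H) : H →ₗ[R] H :=
  LinearMap.toSpanSingleton R H u ∘ₗ εc

theorem eAug_add_unitCounit (εc : H →ₗ[R] R) (u : H) :
    eAug εc u + unitCounit εc u = LinearMap.id :=
  sub_add_cancel _ _

def selPow (εc : H →ₗ[R] R) (u : H) : (n : ℕ) → Finset (Fin n) → (Tpow R H n →ₗ[R] Tpow R H n)
  | 0, _ => LinearMap.id
  | n + 1, S =>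
      TensorProduct.map (cond (decide (0 ∈ S)) (eAug εc u) (unitCounit εc u))
        (selPow εc u n (S.preimage Fin.succ (Fin.succ_injective n).injOn))

def finsetFinSuccEquiv (n : ℕ) : Finset (Fin (n + 1)) ≃ Bool × Finset (Fin n) where
  toFun S := (decide (0 ∈ S), S.preimage Fin.succ (Fin.succ_injective n).injOn)
  invFun p := (if p.1 then {0} else ∅) ∪ p.2.image Fin.succ
  left_inv S := by
    ext j
    rcases Fin.eq_zero_or_eq_succ j with rfl | ⟨i, rfl⟩ <;>
      by_cases h : 0 ∈ S <;> simp [h, Fin.succ_ne_zero]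
  right_inv p := by
    rcases p with ⟨b, T⟩
    refine Prod.ext ?_ ?_
    · cases b <;> simp [Fin.succ_ne_zero]
    · ext i
      cases b <;> simp

theorem sum_selPow (εc : H →ₗ[R] R) (u : H) (n : ℕ) :
    ∑ S : Finset (Fin n), selPow εc u n S = LinearMap.id := by
  induction n with
  | zero => simp [selPow]
  | succ m ih =>
    have sum_map_selPow (f : H →ₗ[R] H) :
        ∑ T : Finset (Fin m), map f (selPow εc u m T) = map f .id := by
      simp only [← mapBilinear_apply (R := R), ← map_sum, ih]
    -- `Tpow R H (m + 1)` is `H ⊗[R] Tpow R H m` only after unfolding; the ascription makes the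
    -- sum live in the latter, where the lemmas about `map` apply.
    calc (∑ S, selPow εc u (m + 1) S : H ⊗[R] Tpow R H m →ₗ[R] H ⊗[R] Tpow R H m)
        = ∑ p : Bool × Finset (Fin m),
            map (cond p.1 (eAug εc u) (unitCounit εc u)) (selPow εc u m p.2) :=
          Fintype.sum_equiv (finsetFinSuccEquiv m) _ _ fun _ => rfl
      _ = map (eAug εc u + unitCounit εc u) .id := by
        rw [Fintype.sum_prod_type, Fintype.sum_bool]
        simp only [cond_true, cond_false, sum_map_selPow, map_add_left]
      _ = LinearMap.id := by rw [eAug_add_unitCounit, map_id]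

section InsMap

variable (Δc : H →ₗ[R] H ⊗[R] H) (εc : H →ₗ[R] R) (u : H)

theorem tpowCast_comp_deltaPow {m n : ℕ} (h : m = n) :
    tpowCast h ∘ₗ deltaPow Δc εc u m = deltaPow Δc εc u n := by
  subst h; rfl

theorem insMap_succ_comp_deltaPow_of_mem {n : ℕ} {S : Finset (Fin (n + 1))} (h : 0 ∈ S) :
    insMap u (n + 1) S ∘ₗ deltaPow Δc εc u S.card
      = LinearMap.lTensor H (insMap u n (S.preimage Fin.succ (Fin.succ_injective n).injOn))
          ∘ₗ deltaPow Δc εc u ((S.preimage Fin.succ (Fin.succ_injective n).injOn).card + 1) := by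
  rw [insMap, dif_pos h]
  exact LinearMap.comp_assoc _ _ _ |>.trans <|
    congrArg (LinearMap.lTensor H (insMap u n _)).comp (tpowCast_comp_deltaPow Δc εc u _)

theorem insMap_succ_comp_deltaPow_of_notMem {n : ℕ} {S : Finset (Fin (n + 1))} (h : 0 ∉ S) :
    insMap u (n + 1) S ∘ₗ deltaPow Δc εc u S.card
      = mk R H (Tpow R H n) u
          ∘ₗ insMap u n (S.preimage Fin.succ (Fin.succ_injective n).injOn)
          ∘ₗ deltaPow Δc εc u (S.preimage Fin.succ (Fin.succ_injective n).injOn).card := by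
  rw [insMap, dif_neg h]
  exact LinearMap.comp_assoc _ _ _ |>.trans <|
    congrArg (mk R H (Tpow R H n) u ∘ₗ insMap u n _).comp (tpowCast_comp_deltaPow Δc εc u _)

end InsMap

section Coalgebra

variable [Coalgebra R H]

local notation "Δ" => Coalgebra.comul (R := R) (A := H)
local notation "ε" => Coalgebra.counit (R := R) (A := H)

theorem iterComul_succ (n : ℕ) :
    iterComul Δ ε (n + 1) = LinearMap.lTensor H (iterComul Δ ε n) ∘ₗ Δ := by
  induction n with
  | zero =>
    ext a
    exact (Coalgebra.lTensor_counit_comul a).symm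
  | succ m ih =>
    change (TensorProduct.assoc R H H _).toLinearMap ∘ₗ LinearMap.rTensor _ Δ
      ∘ₗ iterComul Δ ε (m + 1) = _
    rw [ih, ← LinearMap.comp_assoc _ _ (LinearMap.rTensor _ Δ), LinearMap.rTensor_comp_lTensor,
      ← LinearMap.comp_assoc, assoc_comp_map_eq, LinearMap.comp_assoc, LinearMap.comp_assoc,
      Coalgebra.coassoc, ← LinearMap.comp_assoc, ← LinearMap.lTensor_comp]
    rfl

theorem deltaPow_succ (u : H) (n : ℕ) :
    deltaPow Δ ε u (n + 1) = map (eAug ε u) (deltaPow Δ ε u n) ∘ₗ Δ := by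
  change map (eAug ε u) (mapPow (eAug ε u) n) ∘ₗ iterComul Δ ε (n + 1) = _
  rw [iterComul_succ, ← LinearMap.comp_assoc, LinearMap.map_comp_lTensor]
  rfl

theorem map_unitCounit_comp_comul (u : H) {T : Type*} [AddCommMonoid T] [Module R T]
    (g : H →ₗ[R] T) :
    map (unitCounit ε u) g ∘ₗ Δ = mk R H T u ∘ₗ g := by
  rw [unitCounit, ← LinearMap.map_comp_rTensor, LinearMap.comp_assoc,
    Coalgebra.rTensor_counit_comp_comul]
  ext a
  simp

theorem selPow_comp_iterComul (u : H) (n : ℕ) (S : Finset (Fin n)) :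
    selPow ε u n S ∘ₗ iterComul Δ ε n = insMap u n S ∘ₗ deltaPow Δ ε u S.card := by
  induction n with
  | zero =>
    rw [insMap, tpowCast_comp_deltaPow]
    rfl
  | succ m ih =>
    change map _ (selPow ε u m _) ∘ₗ iterComul Δ ε (m + 1) = _
    rw [iterComul_succ, ← LinearMap.comp_assoc, LinearMap.map_comp_lTensor, ih]
    by_cases h : 0 ∈ S
    · rw [insMap_succ_comp_deltaPow_of_mem _ _ _ h, deltaPow_succ, decide_eq_true h, cond_true,
        ← LinearMap.comp_assoc, LinearMap.lTensor_comp_map]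
    · rw [insMap_succ_comp_deltaPow_of_notMem _ _ _ h, decide_eq_false h, cond_false,
        map_unitCounit_comp_comul]

end Coalgebra

theorem stmt1_general {R : Type u} [CommRing R] {H : Type u} [AddCommGroup H] [Module R H]
    [Coalgebra R H] (u : H)
    (n : ℕ) (a : H) :
    iterComul (Coalgebra.comul (R := R) (A := H)) (Coalgebra.counit (R := R) (A := H)) n a
      = ∑ S : Finset (Fin n),
          insMap u n S
            (deltaPow (Coalgebra.comul (R := R) (A := H))
              (Coalgebra.counit (R := R) (A := H)) u S.card a) := by
  calc iterComul Coalgebra.comul Coalgebra.counit n a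
      = (∑ S : Finset (Fin n), selPow Coalgebra.counit u n S)
          (iterComul Coalgebra.comul Coalgebra.counit n a) := by rw [sum_selPow]; rfl
    _ = _ := by
      rw [LinearMap.sum_apply]
      exact Finset.sum_congr rfl fun S _ => LinearMap.congr_fun (selPow_comp_iterComul u n S) a

theorem stmt1 {R : Type u} [CommRing R] {H : Type u} [AddCommGroup H] [Module R H]
    [Coalgebra R H] (u : H)
    (hεu : Coalgebra.counit (R := R) (A := H) u = 1)
    (hΔu : Coalgebra.comul (R := R) (A := H) u = u ⊗ₜ[R] u)
    (n : ℕ) (hn : 1 ≤ n) (a : H) :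
    iterComul (Coalgebra.comul (R := R) (A := H)) (Coalgebra.counit (R := R) (A := H)) n a
      = ∑ S : Finset (Fin n),
          insMap u n S
            (deltaPow (Coalgebra.comul (R := R) (A := H))
              (Coalgebra.counit (R := R) (A := H)) u S.card a) :=
  stmt1_general u n a
end
end

section
/- Let k be a commutative ring and H a bialgebra over k, regarded as a coaugmented coalgebra via its unit. If a ∈ P_n(H) and b ∈ P_m(H), then the product a·b lies in P_{n+m}(H). -/
open TensorProduct

noncomputable section

universe u

variable (R : Type u) [CommRing R]

variable {R}
variable {H : Type u} [AddCommGroup H] [Module R H]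

/-- The `n`-th term `P_n(H) := ker (δ^{n+1})` of the coradical filtration. -/
def corad (Δc : H →ₗ[R] H ⊗[R] H) (εc : H →ₗ[R] R) (u : H) (n : ℕ) : Submodule R H :=
  LinearMap.ker (deltaPow Δc εc u (n + 1))

/-!
Let `degLE N p ⊆ H^{⊗N}` be the span of the pure tensors with at most `p` factors different
from `1`. Writing `id = e_H + η ∘ ε` in the first factor of `Δ^{(N+1)} = (id ⊗ Δ^{(N)}) ∘ Δ`
shows, by induction on `N`, that `Δ^{(N)} a` modulo `degLE N n` is a linear function of
`δ^{n+1} a`; hence `a ∈ P_n` gives `Δ^{(N)} a ∈ degLE N n`. Take `N = n + m + 1`. Since `Δ^{(N)}`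
is multiplicative, `Δ^{(N)} (a b)` is a sum of factorwise products of pure tensors from
`degLE N n` and `degLE N m`; as `n + m < N`, each has a factor `1 · 1`, which `e_H^{⊗N}` kills.
-/

open Finset in
theorem Finset.exists_eq_and_eq_of_card_ne_add_card_ne_lt {ι α : Type*} [Fintype ι]
    {x y : ι → α} {c : α} [DecidablePred (fun i => x i ≠ c)] [DecidablePred (fun i => y i ≠ c)]
    (h : #{i | x i ≠ c} + #{i | y i ≠ c} < Fintype.card ι) : ∃ i, x i = c ∧ y i = c := by
  classical
  by_contra! hxy
  have hcover : univ ⊆ univ.filter (fun i => x i ≠ c) ∪ univ.filter (fun i => y i ≠ c) := by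
    intro i _
    by_cases hi : x i = c <;> simp [hi, hxy]
  have := (card_le_card hcover).trans (card_union_le _ _)
  rw [card_univ] at this
  omega

theorem TensorProduct.assoc_rTensor_lTensor {P Q S M N : Type*} [AddCommGroup P] [Module R P]
    [AddCommGroup Q] [Module R Q] [AddCommGroup S] [Module R S] [AddCommGroup M] [Module R M]
    [AddCommGroup N] [Module R N] (g : P →ₗ[R] Q ⊗[R] S) (f : M →ₗ[R] N) (u : P ⊗[R] M) :
    TensorProduct.assoc R Q S N (g.rTensor N (f.lTensor P u)) =
      (f.lTensor S).lTensor Q (TensorProduct.assoc R Q S M (g.rTensor M u)) := by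
  rw [← LinearMap.comp_apply (g.rTensor N), LinearMap.rTensor_comp_lTensor,
    ← LinearMap.lTensor_comp_rTensor, LinearMap.comp_apply, LinearMap.lTensor_tensor]
  simp only [LinearMap.comp_apply, LinearEquiv.coe_coe, LinearEquiv.apply_symm_apply]

namespace Tpow

section Module

variable {A : Type u} [AddCommGroup A] [Module R A]

def cons {N : ℕ} (h : A) : Tpow R A N →ₗ[R] Tpow R A (N + 1) :=
  TensorProduct.mk R A (Tpow R A N) h

def tprod : (N : ℕ) → (Fin N → A) → Tpow R A N
  | 0, _ => (1 : R)
  | N + 1, x => cons (x 0) (tprod N (Fin.tail x))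

theorem mapPow_tprod (e : A →ₗ[R] A) (N : ℕ) (x : Fin N → A) :
    mapPow e N (tprod N x) = tprod N (e ∘ x) := by
  induction N with
  | zero => rfl
  | succ N ih => exact congrArg (cons (e (x 0))) (ih _)

theorem tprod_eq_zero {N : ℕ} {x : Fin N → A} {i : Fin N} (hi : x i = 0) :
    tprod (R := R) N x = 0 := by
  induction N with
  | zero => exact i.elim0
  | succ N ih =>
    cases i using Fin.cases with
    | zero => exact (congrArg (cons · _) hi).trans (zero_tmul _ _)
    | succ i => exact (congrArg (cons _) (ih (i := i) hi)).trans (map_zero _)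

end Module

open Finset

variable {A : Type u} [Ring A] [Algebra R A]

variable (R A) in
def mul : (N : ℕ) → Tpow R A N ⊗[R] Tpow R A N →ₗ[R] Tpow R A N
  | 0 => LinearMap.mul' R R
  | N + 1 => map (LinearMap.mul' R A) (mul N) ∘ₗ
      (tensorTensorTensorComm R A (Tpow R A N) A (Tpow R A N)).toLinearMap

theorem mul_tprod_tmul_tprod (N : ℕ) (x y : Fin N → A) :
    mul R A N (tprod N x ⊗ₜ[R] tprod N y) = tprod N (x * y) := by
  induction N with
  | zero => exact mul_one (1 : R)
  | succ N ih => exact congrArg (cons (x 0 * y 0)) (ih _ _)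

-- The right-hand side is `mul R A (N + 1) (f.lTensor A u ⊗ₜ f.lTensor A v)`, unfolded so that
-- both sides live in `A ⊗[R] Tpow R A N` rather than in `Tpow R A (N + 1)`.
theorem lTensor_mul {N : ℕ} {f : A →ₗ[R] Tpow R A N}
    (hf : ∀ a b, f (a * b) = mul R A N (f a ⊗ₜ[R] f b)) (u v : A ⊗[R] A) :
    f.lTensor A (u * v) = map (LinearMap.mul' R A) (mul R A N)
      (tensorTensorTensorComm R A _ A _ (f.lTensor A u ⊗ₜ[R] f.lTensor A v)) := by
  induction u with
  | zero => simp only [zero_mul, map_zero, zero_tmul]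
  | add u u' hu hu' => simp only [add_mul, map_add, hu, hu', add_tmul]
  | tmul x y =>
    induction v with
    | zero => simp only [mul_zero, map_zero, tmul_zero]
    | add v v' hv hv' => simp only [mul_add, map_add, hv, hv', tmul_add]
    | tmul x' y' =>
      rw [Algebra.TensorProduct.tmul_mul_tmul, LinearMap.lTensor_tmul, hf]
      rfl

open scoped Classical in
variable (R A) in
def degLE (N p : ℕ) : Submodule R (Tpow R A N) :=
  Submodule.span R (tprod N '' {x | #{i | x i ≠ 1} ≤ p})

theorem degLE_zero (p : ℕ) : degLE R A 0 p = ⊤ := by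
  refine eq_top_iff.2 fun r _ => ?_
  have h1 : tprod 0 Fin.elim0 ∈ degLE R A 0 p := Submodule.subset_span ⟨_, by simp, rfl⟩
  convert Submodule.smul_mem _ (show R from r) h1 using 1
  exact (mul_one (show R from r)).symm

open scoped Classical in
theorem cons_mem_degLE {N p q : ℕ} (h : A) (hpq : (if h = 1 then 0 else 1) + p ≤ q)
    {w : Tpow R A N} (hw : w ∈ degLE R A N p) : cons h w ∈ degLE R A (N + 1) q := by
  refine Submodule.map_span_le (cons h) _ (degLE R A (N + 1) q) |>.2 ?_ ⟨w, hw, rfl⟩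
  rintro _ ⟨x, hx, rfl⟩
  refine Submodule.subset_span ⟨Fin.cons h x, ?_, rfl⟩
  simp only [Set.mem_ofPred_eq, Fin.card_filter_univ_succ', Fin.cons_zero, Fin.cons_succ] at hx ⊢
  split_ifs at hpq ⊢ <;> simp_all <;> omega

theorem cons_one_mem_degLE {N p : ℕ} {w : Tpow R A N} (hw : w ∈ degLE R A N p) :
    cons 1 w ∈ degLE R A (N + 1) p :=
  cons_mem_degLE 1 (by simp) hw

theorem range_lTensor_subtype_degLE_le (N p : ℕ) :
    LinearMap.range ((degLE R A N p).subtype.lTensor A) ≤ degLE R A (N + 1) (p + 1) := by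
  refine (range_map_eq_span_tmul _ _).le.trans (Submodule.span_le.2 ?_)
  rintro _ ⟨h, w, rfl⟩
  exact cons_mem_degLE h (by split_ifs <;> omega) w.2

theorem mapPow_mul_eq_zero {e : A →ₗ[R] A} (he : e 1 = 0) {N p q : ℕ} (hpq : p + q < N)
    {s t : Tpow R A N} (hs : s ∈ degLE R A N p) (ht : t ∈ degLE R A N q) :
    mapPow e N (mul R A N (s ⊗ₜ[R] t)) = 0 := by
  classical
  let B := (TensorProduct.mk R _ _).compr₂ (mapPow e N ∘ₗ mul R A N)
  suffices Submodule.map₂ B (degLE R A N p) (degLE R A N q) = ⊥ from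
    (Submodule.eq_bot_iff _).1 this _ (Submodule.apply_mem_map₂ B hs ht)
  rw [degLE, degLE, Submodule.map₂_span_span, Submodule.span_eq_bot]
  rintro _ ⟨_, ⟨x, hx, rfl⟩, _, ⟨y, hy, rfl⟩, rfl⟩
  obtain ⟨i, hxi, hyi⟩ := exists_eq_and_eq_of_card_ne_add_card_ne_lt
    (lt_of_le_of_lt (add_le_add hx hy) (by simpa using hpq))
  simp only [B, LinearMap.compr₂_apply, mk_apply, LinearMap.comp_apply, mul_tprod_tmul_tprod,
    mapPow_tprod]
  exact tprod_eq_zero (i := i) (by simp [hxi, hyi, he])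

end Tpow

section Bialgebra

open Coalgebra Tpow

variable {A : Type u} [Ring A] [Bialgebra R A]

theorem iterComul_succ_apply (N : ℕ) (a : A) :
    iterComul comul counit (N + 1) a = (iterComul comul counit N).lTensor A (comul (R := R) a) := by
  induction N generalizing a with
  | zero => exact (lTensor_counit_comul a).symm
  | succ N ih =>
    set f := iterComul (R := R) (H := A) comul counit N
    have hR (u : A ⊗[R] A) : (iterComul comul counit (N + 1)).lTensor A u =
        (f.lTensor A).lTensor A ((comul (R := R)).lTensor A u) := by
      induction u with
      | zero => simp only [map_zero]; rfl
      | tmul x y => exact congrArg (x ⊗ₜ[R] ·) (ih y)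
      | add u v hu hv => simp only [map_add, hu, hv]; rfl
    show TensorProduct.assoc R A A _
      ((comul (R := R)).rTensor _ (iterComul comul counit (N + 1) a)) = _
    rw [hR, ih, TensorProduct.assoc_rTensor_lTensor, coassoc_apply]

theorem deltaPow_succ_apply (N : ℕ) (a : A) :
    deltaPow comul counit 1 (N + 1) a =
      map (eAug counit 1) (deltaPow comul counit 1 N) (comul (R := R) a) := by
  show mapPow _ (N + 1) (iterComul comul counit (N + 1) a) = _
  rw [iterComul_succ_apply]
  exact LinearMap.map_lTensor A _ _ _ _

theorem iterComul_succ_apply_eq_add (N : ℕ) (a : A) :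
    iterComul comul counit (N + 1) a =
      (map (eAug counit 1) (iterComul comul counit N) (comul (R := R) a) +
        (1 : A) ⊗ₜ[R] iterComul comul counit N a : A ⊗[R] Tpow R A N) := by
  have hsplit : LinearMap.id = eAug (counit (R := R) (A := A)) 1 +
      LinearMap.toSpanSingleton R A 1 ∘ₗ counit := by
    simp [eAug]
  rw [iterComul_succ_apply, LinearMap.lTensor, hsplit, map_add_left, LinearMap.add_apply,
    ← LinearMap.map_rTensor, rTensor_counit_comul, map_tmul]
  simp only [LinearMap.toSpanSingleton_apply, one_smul]
  rfl

theorem iterComul_mul (N : ℕ) (a b : A) :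
    iterComul comul counit N (a * b) =
      Tpow.mul R A N (iterComul comul counit N a ⊗ₜ[R] iterComul comul counit N b) := by
  induction N generalizing a b with
  | zero => exact Bialgebra.counit_mul (R := R) a b
  | succ N ih =>
    rw [iterComul_succ_apply, iterComul_succ_apply, iterComul_succ_apply, Bialgebra.comul_mul]
    exact Tpow.lTensor_mul ih _ _

theorem eAug_counit_one : eAug (counit (R := R) (A := A)) 1 1 = 0 := by
  simp [eAug]

theorem map_eAug_comul_eAug {M : Type*} [AddCommGroup M] [Module R M] (g : A →ₗ[R] M) (a : A) :
    map (eAug (counit (R := R)) 1) g (comul (eAug (counit (R := R)) 1 a)) =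
      map (eAug (counit (R := R)) 1) g (comul a) := by
  have he : eAug (counit (R := R)) 1 a = a - counit (R := R) a • 1 := by simp [eAug]
  rw [he, map_sub, map_smul, Bialgebra.comul_one, Algebra.TensorProduct.one_def, map_sub,
    map_smul, map_tmul, eAug_counit_one, zero_tmul, smul_zero, sub_zero]

theorem rid_deltaPow_one (a : A) :
    TensorProduct.rid R A (deltaPow comul counit 1 1 a) = eAug (counit (R := R)) 1 a := by
  show TensorProduct.rid R A (map _ LinearMap.id (a ⊗ₜ[R] 1)) = _
  simp

theorem exists_mkQ_map_eAug_iterComul_comul_eq {N n : ℕ}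
    {h : Tpow R A (n + 1) →ₗ[R] Tpow R A N ⧸ degLE R A N n}
    (hh : ∀ a : A, (degLE R A N n).mkQ (iterComul comul counit N a) =
      h (deltaPow comul counit 1 (n + 1) a)) :
    ∃ g : Tpow R A (n + 1 + 1) →ₗ[R] Tpow R A (N + 1) ⧸ degLE R A (N + 1) (n + 1), ∀ a : A,
      (degLE R A (N + 1) (n + 1)).mkQ (map (eAug counit 1) (iterComul comul counit N) (comul a)) =
        g (deltaPow comul counit 1 (n + 1 + 1) a) := by
  let Q : A ⊗[R] Tpow R A N →ₗ[R] Tpow R A (N + 1) ⧸ degLE R A (N + 1) (n + 1) :=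
    (degLE R A (N + 1) (n + 1)).mkQ
  have hQ : LinearMap.range ((degLE R A N n).subtype.lTensor A) ≤ LinearMap.ker Q := fun v hv =>
    (Submodule.Quotient.mk_eq_zero _).2 (range_lTensor_subtype_degLE_le N n hv)
  -- `A ⊗ -` is right exact, so `Q` descends to `A ⊗ (Tpow R A N ⧸ degLE R A N n)`.
  let φ := Submodule.liftQ _ Q hQ ∘ₗ (tensorQuotientEquiv A (degLE R A N n)).toLinearMap
  have hφ (v : A ⊗[R] Tpow R A N) : φ ((degLE R A N n).mkQ.lTensor A v) = Q v := by
    induction v with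
    | zero => simp only [map_zero]
    | tmul => rfl
    | add v v' hv hv' => simp only [map_add, hv, hv']
  have hh' : (degLE R A N n).mkQ ∘ₗ iterComul comul counit N =
      h ∘ₗ deltaPow comul counit 1 (n + 1) := LinearMap.ext hh
  refine ⟨φ ∘ₗ h.lTensor A, fun a => ?_⟩
  rw [deltaPow_succ_apply]
  show Q _ = φ (h.lTensor A _)
  rw [LinearMap.lTensor_map, ← hh', ← LinearMap.lTensor_map, hφ]

-- A factorization and not merely `ker δ^{n+1} ≤ ker (mkQ ∘ Δ^{(N)})`: the induction step uses it
-- under `A ⊗ -`, which does not preserve kernels.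
theorem exists_mkQ_iterComul_eq (N n : ℕ) :
    ∃ h : Tpow R A (n + 1) →ₗ[R] Tpow R A N ⧸ degLE R A N n, ∀ a : A,
      (degLE R A N n).mkQ (iterComul comul counit N a) = h (deltaPow comul counit 1 (n + 1) a) := by
  induction N generalizing n with
  | zero =>
    refine ⟨0, fun a => (Submodule.Quotient.mk_eq_zero _).2 ?_⟩
    rw [degLE_zero]
    exact Submodule.mem_top
  | succ N ih =>
    -- The quotient map retyped on `A ⊗[R] Tpow R A N`, where the splitting of `Δ^{(N+1)} a` lives.
    let Q : A ⊗[R] Tpow R A N →ₗ[R] Tpow R A (N + 1) ⧸ degLE R A (N + 1) n :=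
      (degLE R A (N + 1) n).mkQ
    obtain ⟨g, hg⟩ : ∃ g : Tpow R A (n + 1) →ₗ[R] Tpow R A (N + 1) ⧸ degLE R A (N + 1) n,
        ∀ a : A, Q (map (eAug counit 1) (iterComul comul counit N) (comul a)) =
          g (deltaPow comul counit 1 (n + 1) a) := by
      cases n with
      | zero =>
        refine ⟨Q ∘ₗ map (eAug counit 1) (iterComul comul counit N) ∘ₗ comul ∘ₗ
          (TensorProduct.rid R A).toLinearMap, fun a => ?_⟩
        show Q _ = Q (map _ _ (comul (TensorProduct.rid R A (deltaPow comul counit 1 1 a))))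
        rw [rid_deltaPow_one, map_eAug_comul_eAug]
      | succ n => exact exists_mkQ_map_eAug_iterComul_comul_eq (ih n).choose_spec
    obtain ⟨h, hh⟩ := ih n
    refine ⟨g + Submodule.mapQ _ _ (cons 1) (fun _ => cons_one_mem_degLE) ∘ₗ h, fun a => ?_⟩
    show Q _ = _
    rw [iterComul_succ_apply_eq_add, map_add, hg, LinearMap.add_apply, LinearMap.comp_apply, ← hh]
    rfl

theorem iterComul_mem_degLE {n : ℕ} {a : A} (ha : a ∈ corad (comul (R := R)) counit (1 : A) n)
    (N : ℕ) : iterComul comul counit N a ∈ degLE R A N n := by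
  obtain ⟨h, hh⟩ := exists_mkQ_iterComul_eq (R := R) (A := A) N n
  rw [← Submodule.Quotient.mk_eq_zero, ← Submodule.mkQ_apply, hh, LinearMap.mem_ker.1 ha, map_zero]

end Bialgebra

/-- For a bialgebra `H` (viewed as a coaugmented coalgebra via its unit),
if `a ∈ P_n(H)` and `b ∈ P_m(H)`, then `a * b ∈ P_{n+m}(H)`. -/
theorem stmt4 {R : Type u} [CommRing R] {H : Type u} [Ring H] [Bialgebra R H]
    (n m : ℕ) (a b : H)
    (ha : a ∈ corad (Coalgebra.comul (R := R) (A := H))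
      (Coalgebra.counit (R := R) (A := H)) (1 : H) n)
    (hb : b ∈ corad (Coalgebra.comul (R := R) (A := H))
      (Coalgebra.counit (R := R) (A := H)) (1 : H) m) :
    a * b ∈ corad (Coalgebra.comul (R := R) (A := H))
      (Coalgebra.counit (R := R) (A := H)) (1 : H) (n + m) := by
  show mapPow _ (n + m + 1) (iterComul _ _ (n + m + 1) (a * b)) = 0
  rw [iterComul_mul]
  exact Tpow.mapPow_mul_eq_zero eAug_counit_one (by omega)
    (iterComul_mem_degLE ha _) (iterComul_mem_degLE hb _)
end
end

section
/- Let k be a field and H a coaugmented coalgebra over k. For every n ∈ ℕ, the subspace P_n(H) is a subcoalgebra of H containing 1_H: one has Δ(P_n(H)) ⊆ P_n(H) ⊗ P_n(H) (that is, Δ maps P_n(H) into the image of the canonical map P_n(H) ⊗ P_n(H) → H ⊗ H), 1_H ∈ P_n(H), so P_n(H) is itself a coaugmented coalgebra with the restricted structure maps. -/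
open TensorProduct

noncomputable section

universe u

variable (R : Type u) [CommRing R]

variable {R}
variable {H : Type u} [AddCommGroup H] [Module R H]

/-!
With `e = id - η ∘ ε`, the iterated coproduct can be split at either end:
`δ^{n+2} = (e ⊗ δ^{n+1}) ∘ Δ` by coassociativity, and `δ^{n+2} = (δ^{n+1} ⊗ e) ∘ Δ` up to
rebracketing. Since `(ε ⊗ id) ∘ Δ = id = (id ⊗ ε) ∘ Δ`, this gives
`(id ⊗ δ^{n+1}) (Δ x) = δ^{n+2} x + 1 ⊗ δ^{n+1} x` and symmetrically on the other side.
As `1` is group-like, `(e ⊗ e) ∘ Δ ∘ e = (e ⊗ e) ∘ Δ`, so `δ^{n+2}` factors through `δ^{n+1}` and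
`P_n ⊆ P_{n+1}`. Hence for `x ∈ P_n`, `Δ x` lies in `(P_n ⊗ H) ∩ (H ⊗ P_n)`, which over a field
(by flatness) is `P_n ⊗ P_n`.
-/

open LinearMap

def tpowSuccEquiv : (n : ℕ) → (Tpow R H n ⊗[R] H ≃ₗ[R] Tpow R H (n + 1))
  | 0 => TensorProduct.comm R R H
  | n + 1 =>
      TensorProduct.assoc R H (Tpow R H n) H ≪≫ₗ
        TensorProduct.congr (LinearEquiv.refl R H) (tpowSuccEquiv n)

lemma mapPow_succ_comp_tpowSuccEquiv (e : H →ₗ[R] H) : (n : ℕ) →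
    mapPow e (n + 1) ∘ₗ (tpowSuccEquiv n).toLinearMap
      = (tpowSuccEquiv n).toLinearMap ∘ₗ TensorProduct.map (mapPow e n) e
  | 0 => TensorProduct.ext' fun _ _ => rfl
  | n + 1 => TensorProduct.ext_threefold fun a t h => by
      have ih := DFunLike.congr_fun (mapPow_succ_comp_tpowSuccEquiv e n) (t ⊗ₜ[R] h)
      simp only [comp_apply, LinearEquiv.coe_coe, TensorProduct.map_tmul] at ih
      show TensorProduct.map e (mapPow e (n + 1)) (a ⊗ₜ[R] tpowSuccEquiv n (t ⊗ₜ[R] h))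
        = e a ⊗ₜ[R] tpowSuccEquiv n (mapPow e n t ⊗ₜ[R] e h)
      rw [TensorProduct.map_tmul, ih]

lemma assoc_tmul_tpowSuccEquiv (n : ℕ) (y : H ⊗[R] H) (t : Tpow R H n) (h : H) :
    TensorProduct.assoc R H H (Tpow R H (n + 1)) (y ⊗ₜ[R] tpowSuccEquiv n (t ⊗ₜ[R] h))
      = tpowSuccEquiv (n + 2) (TensorProduct.assoc R H H (Tpow R H n) (y ⊗ₜ[R] t) ⊗ₜ[R] h) := by
  induction y using TensorProduct.induction_on with
  | zero =>
    rw [TensorProduct.zero_tmul, map_zero]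
    exact ((congrArg _ (TensorProduct.zero_tmul _ h)).trans (map_zero _)).symm
  | tmul b c => rfl
  | add y z hy hz =>
    simp only [TensorProduct.add_tmul, map_add, hy, hz]
    exact ((congrArg _ (TensorProduct.add_tmul _ _ h)).trans (map_add _ _ _)).symm

lemma assoc_comp_rTensor_comp_tpowSuccEquiv (f : H →ₗ[R] H ⊗[R] H) (n : ℕ) :
    (TensorProduct.assoc R H H (Tpow R H (n + 1))).toLinearMap
        ∘ₗ f.rTensor (Tpow R H (n + 1)) ∘ₗ (tpowSuccEquiv (n + 1)).toLinearMap
      = (tpowSuccEquiv (n + 2)).toLinearMap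
        ∘ₗ ((TensorProduct.assoc R H H (Tpow R H n)).toLinearMap
            ∘ₗ f.rTensor (Tpow R H n)).rTensor H :=
  TensorProduct.ext_threefold fun a t h => assoc_tmul_tpowSuccEquiv n (f a) t h

-- No coassociativity is needed: the defining recursion always comultiplies the first factor.
lemma iterComul_add_two_eq_tpowSuccEquiv_comp (Δc : H →ₗ[R] H ⊗[R] H) (εc : H →ₗ[R] R) :
    (n : ℕ) →
    iterComul Δc εc (n + 2)
      = (tpowSuccEquiv (n + 1)).toLinearMap ∘ₗ (iterComul Δc εc (n + 1)).rTensor H ∘ₗ Δc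
  | 0 => by
      ext x
      show TensorProduct.assoc R H H R (Δc x ⊗ₜ[R] 1)
        = tpowSuccEquiv 1 ((TensorProduct.rid R H).symm.toLinearMap.rTensor H (Δc x))
      induction Δc x using TensorProduct.induction_on with
      | zero => exact (map_zero (tpowSuccEquiv 1)).symm
      | tmul b c => rfl
      | add y z hy hz =>
        simp only [TensorProduct.add_tmul, map_add, hy, hz]
        exact (map_add _ _ _).symm
  | n + 1 => by
      ext x
      let A : Tpow R H (n + 1) →ₗ[R] Tpow R H (n + 2) :=
        (TensorProduct.assoc R H H (Tpow R H n)).toLinearMap ∘ₗ Δc.rTensor (Tpow R H n)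
      let B : Tpow R H (n + 2) →ₗ[R] Tpow R H (n + 3) :=
        (TensorProduct.assoc R H H (Tpow R H (n + 1))).toLinearMap
          ∘ₗ Δc.rTensor (Tpow R H (n + 1))
      calc B (iterComul Δc εc (n + 2) x)
          = B (tpowSuccEquiv (n + 1) ((iterComul Δc εc (n + 1)).rTensor H (Δc x))) :=
            congrArg B (DFunLike.congr_fun (iterComul_add_two_eq_tpowSuccEquiv_comp Δc εc n) x)
        _ = tpowSuccEquiv (n + 2) (A.rTensor H ((iterComul Δc εc (n + 1)).rTensor H (Δc x))) :=
            DFunLike.congr_fun (assoc_comp_rTensor_comp_tpowSuccEquiv Δc n) _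
        _ = tpowSuccEquiv (n + 2) ((A ∘ₗ iterComul Δc εc (n + 1)).rTensor H (Δc x)) :=
            congrArg _ (rTensor_comp_apply _ _ _ _).symm

lemma deltaPow_add_two_eq_tpowSuccEquiv_comp (Δc : H →ₗ[R] H ⊗[R] H) (εc : H →ₗ[R] R) (u : H)
    (n : ℕ) : deltaPow Δc εc u (n + 2) = (tpowSuccEquiv (n + 1)).toLinearMap
      ∘ₗ TensorProduct.map (deltaPow Δc εc u (n + 1)) (eAug εc u) ∘ₗ Δc := by
  ext x
  show mapPow (eAug εc u) (n + 2) (iterComul Δc εc (n + 2) x) = _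
  rw [iterComul_add_two_eq_tpowSuccEquiv_comp, comp_apply, comp_apply]
  set f := iterComul Δc εc (n + 1)
  exact (DFunLike.congr_fun (mapPow_succ_comp_tpowSuccEquiv (eAug εc u) (n + 1))
    (f.rTensor H (Δc x))).trans (congrArg (tpowSuccEquiv (n + 1))
      (map_rTensor (Tpow R H (n + 1)) (mapPow (eAug εc u) (n + 1)) (eAug εc u) f (Δc x)))

lemma rTensor_eAug_apply (εc : H →ₗ[R] R) (u : H) {M : Type*} [AddCommGroup M] [Module R M]
    (y : H ⊗[R] M) :
    (eAug εc u).rTensor M y = y - u ⊗ₜ[R] TensorProduct.lid R M (εc.rTensor M y) := by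
  induction y using TensorProduct.induction_on with
  | zero => simp
  | tmul a m => simp [eAug, TensorProduct.smul_tmul]
  | add y z hy hz => simp only [map_add, hy, hz, TensorProduct.tmul_add]; abel

lemma lTensor_eAug_apply (εc : H →ₗ[R] R) (u : H) {M : Type*} [AddCommGroup M] [Module R M]
    (y : M ⊗[R] H) :
    (eAug εc u).lTensor M y = y - TensorProduct.rid R M (εc.lTensor M y) ⊗ₜ[R] u := by
  induction y using TensorProduct.induction_on with
  | zero => simp
  | tmul m a => simp [eAug, TensorProduct.smul_tmul']
  | add y z hy hz => simp only [map_add, hy, hz, TensorProduct.add_tmul]; abel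

section Coalgebra

open Coalgebra

variable [Coalgebra R H]

lemma iterComul_add_two_eq_lTensor_comp : (n : ℕ) →
    iterComul comul counit (n + 2) = (iterComul comul counit (n + 1)).lTensor H ∘ₗ comul (R := R)
  | 0 => by
      ext x
      show TensorProduct.assoc R H H R (comul x ⊗ₜ[R] 1)
        = (TensorProduct.rid R H).symm.toLinearMap.lTensor H (comul x)
      induction (comul x : H ⊗[R] H) using TensorProduct.induction_on with
      | zero => simp only [TensorProduct.zero_tmul, map_zero]
      | tmul b c => rfl
      | add y z hy hz => simp only [TensorProduct.add_tmul, map_add, hy, hz]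
  | n + 1 => by
      ext x
      let f : H →ₗ[R] Tpow R H (n + 1) := iterComul comul counit (n + 1)
      let B : Tpow R H (n + 2) →ₗ[R] Tpow R H (n + 3) :=
        (TensorProduct.assoc R H H (Tpow R H (n + 1))).toLinearMap
          ∘ₗ (comul (R := R) (A := H)).rTensor (Tpow R H (n + 1))
      let F : H ⊗[R] (H ⊗[R] H) →ₗ[R] Tpow R H (n + 3) := (f.lTensor H).lTensor H
      let G : H ⊗[R] H →ₗ[R] Tpow R H (n + 3) := (iterComul comul counit (n + 2)).lTensor H
      have hB : B ∘ₗ f.lTensor H = F ∘ₗ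
          (TensorProduct.assoc R H H H).toLinearMap ∘ₗ (comul (R := R) (A := H)).rTensor H := by
        refine TensorProduct.ext' fun a b => ?_
        show TensorProduct.assoc R H H (Tpow R H (n + 1)) (comul a ⊗ₜ[R] f b)
          = F (TensorProduct.assoc R H H H (comul a ⊗ₜ[R] b))
        induction (comul a : H ⊗[R] H) using TensorProduct.induction_on with
        | zero => simp only [TensorProduct.zero_tmul, map_zero]; rfl
        | tmul c d => rfl
        | add y z hy hz => simp only [TensorProduct.add_tmul, map_add, hy, hz]; rfl
      calc B (iterComul comul counit (n + 2) x)
          = B (f.lTensor H (comul x)) :=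
            congrArg B (DFunLike.congr_fun (iterComul_add_two_eq_lTensor_comp n) x)
        _ = F (TensorProduct.assoc R H H H (comul.rTensor H (comul x))) :=
            DFunLike.congr_fun hB (comul x)
        _ = F (comul.lTensor H (comul x)) := by
            rw [Coalgebra.coassoc_apply]
        _ = G (comul x) := by
            show (f.lTensor H).lTensor H (comul.lTensor H (comul x))
              = (iterComul comul counit (n + 2)).lTensor H (comul x)
            rw [iterComul_add_two_eq_lTensor_comp n]
            exact (lTensor_comp_apply H (f.lTensor H) comul (comul x)).symm

lemma deltaPow_add_two_eq_map_comp_comul (u : H) (n : ℕ) :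
    deltaPow comul counit u (n + 2)
      = TensorProduct.map (eAug counit u) (deltaPow comul counit u (n + 1)) ∘ₗ comul (R := R) := by
  ext x
  show mapPow (eAug counit u) (n + 2) (iterComul comul counit (n + 2) x) = _
  rw [iterComul_add_two_eq_lTensor_comp]
  exact map_lTensor _ _ _ _ _

lemma deltaPow_add_two_apply_eq_lTensor_sub (u x : H) (n : ℕ) :
    deltaPow comul (counit (R := R)) u (n + 2) x
      = (deltaPow comul counit u (n + 1)).lTensor H (comul x)
        - u ⊗ₜ[R] deltaPow comul counit u (n + 1) x := by
  set δ := deltaPow comul (counit (R := R)) u (n + 1)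
  have hδ : deltaPow comul counit u (n + 2) x
      = (eAug counit u).rTensor (Tpow R H (n + 1)) (δ.lTensor H (comul x)) :=
    (DFunLike.congr_fun (deltaPow_add_two_eq_map_comp_comul u n) x).trans
      (DFunLike.congr_fun (rTensor_comp_lTensor _ _ _) _).symm
  have hε : counit.rTensor (Tpow R H (n + 1)) (δ.lTensor H (comul x)) = 1 ⊗ₜ[R] δ x := by
    rw [← comp_apply, rTensor_comp_lTensor, ← lTensor_comp_rTensor, comp_apply,
      rTensor_counit_comul, lTensor_tmul]
  rw [hδ, rTensor_eAug_apply, hε, TensorProduct.lid_tmul, one_smul]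
  rfl

lemma tpowSuccEquiv_symm_deltaPow_add_two_apply (u x : H) (n : ℕ) :
    (tpowSuccEquiv (n + 1)).symm (deltaPow comul (counit (R := R)) u (n + 2) x)
      = (deltaPow comul counit u (n + 1)).rTensor H (comul x)
        - deltaPow comul counit u (n + 1) x ⊗ₜ[R] u := by
  set δ := deltaPow comul (counit (R := R)) u (n + 1)
  have hδ : (tpowSuccEquiv (n + 1)).symm (deltaPow comul counit u (n + 2) x)
      = (eAug counit u).lTensor (Tpow R H (n + 1)) (δ.rTensor H (comul x)) := by
    rw [DFunLike.congr_fun (deltaPow_add_two_eq_tpowSuccEquiv_comp comul counit u n) x]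
    exact ((tpowSuccEquiv (n + 1)).symm_apply_apply _).trans
      (DFunLike.congr_fun (lTensor_comp_rTensor _ _ _) _).symm
  have hε : counit.lTensor (Tpow R H (n + 1)) (δ.rTensor H (comul x)) = δ x ⊗ₜ[R] 1 := by
    rw [← comp_apply, lTensor_comp_rTensor, ← rTensor_comp_lTensor, comp_apply,
      lTensor_counit_comul, rTensor_tmul]
  rw [hδ, lTensor_eAug_apply, hε, TensorProduct.rid_tmul, one_smul]

lemma eAug_self {u : H} (hu : IsGroupLikeElem R u) : eAug (counit (R := R)) u u = 0 := by
  simp [eAug, hu.counit_eq_one]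

lemma map_eAug_comp_comul_comp_eAug {u : H} (hu : IsGroupLikeElem R u) :
    (TensorProduct.map (eAug counit u) (eAug counit u) ∘ₗ comul) ∘ₗ eAug counit u
      = TensorProduct.map (eAug counit u) (eAug counit u) ∘ₗ comul (R := R) := by
  ext x
  simp [eAug, hu.comul_eq_tmul_self, hu.counit_eq_one]

lemma self_mem_corad {u : H} (hu : IsGroupLikeElem R u) (n : ℕ) :
    u ∈ corad comul (counit (R := R)) u n := by
  cases n with
  | zero =>
    show TensorProduct.map (eAug counit u) LinearMap.id ((TensorProduct.rid R H).symm u) = 0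
    rw [TensorProduct.rid_symm_apply, TensorProduct.map_tmul, eAug_self hu,
      TensorProduct.zero_tmul]
  | succ n =>
    refine (DFunLike.congr_fun (deltaPow_add_two_eq_map_comp_comul u n) u).trans ?_
    show TensorProduct.map (eAug counit u) (deltaPow comul counit u (n + 1)) (comul u)
      = (0 : H ⊗[R] Tpow R H (n + 1))
    rw [hu.comul_eq_tmul_self, TensorProduct.map_tmul, eAug_self hu, TensorProduct.zero_tmul]

lemma deltaPow_add_two_eq_assoc_comp {u : H} (hu : IsGroupLikeElem R u) (n : ℕ) :
    deltaPow comul counit u (n + 2)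
      = (TensorProduct.assoc R H H (Tpow R H n)).toLinearMap
          ∘ₗ (TensorProduct.map (eAug counit u) (eAug counit u) ∘ₗ comul).rTensor (Tpow R H n)
          ∘ₗ deltaPow comul counit u (n + 1) := by
  set e := eAug (counit (R := R)) u
  let T := Tpow R H n
  -- `id` fixes the type of the chain to the unfolded codomain `H ⊗ (H ⊗ T)`.
  calc (id (deltaPow comul counit u (n + 2)) : H →ₗ[R] H ⊗[R] (H ⊗[R] T))
      = (TensorProduct.map e (TensorProduct.map e (mapPow e n))
          ∘ₗ (TensorProduct.assoc R H H T).toLinearMap)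
          ∘ₗ comul.rTensor T ∘ₗ iterComul comul counit (n + 1) := rfl
    _ = ((TensorProduct.assoc R H H T).toLinearMap
          ∘ₗ TensorProduct.map (TensorProduct.map e e) (mapPow e n))
          ∘ₗ comul.rTensor T ∘ₗ iterComul comul counit (n + 1) := by
        rw [TensorProduct.map_map_comp_assoc_eq]
    _ = (TensorProduct.assoc R H H T).toLinearMap
          ∘ₗ TensorProduct.map ((TensorProduct.map e e ∘ₗ comul) ∘ₗ e) (mapPow e n)
          ∘ₗ iterComul comul counit (n + 1) := by
        rw [map_eAug_comp_comul_comp_eAug hu, ← map_comp_rTensor]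
        rfl
    _ = (TensorProduct.assoc R H H T).toLinearMap
          ∘ₗ (TensorProduct.map e e ∘ₗ comul).rTensor T
          ∘ₗ TensorProduct.map e (mapPow e n) ∘ₗ iterComul comul counit (n + 1) := by
        rw [← rTensor_comp_map]
        rfl

lemma corad_le_corad_succ {u : H} (hu : IsGroupLikeElem R u) (n : ℕ) :
    corad comul (counit (R := R)) u n ≤ corad comul counit u (n + 1) := fun x hx => by
  refine (DFunLike.congr_fun (deltaPow_add_two_eq_assoc_comp hu n) x).trans ?_
  show TensorProduct.assoc R H H (Tpow R H n)
      ((TensorProduct.map (eAug counit u) (eAug counit u) ∘ₗ comul).rTensor (Tpow R H n)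
        (deltaPow comul counit u (n + 1) x)) = 0
  rw [show @Eq (H ⊗[R] Tpow R H n) (deltaPow comul counit u (n + 1) x) 0 from hx, map_zero,
    map_zero]

end Coalgebra

lemma TensorProduct.mem_range_map_subtype_ker_of_rTensor_of_lTensor {R M N M' N' : Type*}
    [CommRing R] [AddCommGroup M] [AddCommGroup N] [AddCommGroup M'] [AddCommGroup N']
    [Module R M] [Module R N] [Module R M'] [Module R N']
    (f : M →ₗ[R] M') (g : N →ₗ[R] N') [Module.Flat R N] [Module.Flat R N']
    [Module.Flat R (ker f)] {x : M ⊗[R] N}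
    (hf : f.rTensor N x = 0) (hg : g.lTensor M x = 0) :
    x ∈ range (TensorProduct.map (ker f).subtype (ker g).subtype) := by
  obtain ⟨z, rfl⟩ := (Module.Flat.rTensor_exact N f.exact_subtype_ker_map x).mp hf
  have hz : g.lTensor (ker f) z = 0 := by
    apply Module.Flat.rTensor_preserves_injective_linearMap (M := N') _ (ker f).injective_subtype
    rw [map_zero, ← comp_apply, rTensor_comp_lTensor, ← lTensor_comp_rTensor, comp_apply, hg]
  obtain ⟨w, rfl⟩ := (Module.Flat.lTensor_exact (ker f) g.exact_subtype_ker_map z).mp hz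
  exact ⟨w, (DFunLike.congr_fun (rTensor_comp_lTensor _ _ _) w).symm⟩

/-- Over a field, `P_n(H)` is a subcoalgebra of `H` containing the coaugmentation `1_H`. -/
theorem stmt6 {k : Type u} [Field k] {H : Type u} [AddCommGroup H] [Module k H]
    [Coalgebra k H] (u : H)
    (hεu : Coalgebra.counit (R := k) (A := H) u = 1)
    (hΔu : Coalgebra.comul (R := k) (A := H) u = u ⊗ₜ[k] u) (n : ℕ) :
    u ∈ corad (Coalgebra.comul (R := k) (A := H)) (Coalgebra.counit (R := k) (A := H)) u n ∧
    ∀ x ∈ corad (Coalgebra.comul (R := k) (A := H)) (Coalgebra.counit (R := k) (A := H)) u n,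
      Coalgebra.comul (R := k) (A := H) x ∈
        LinearMap.range (TensorProduct.map
          (corad (Coalgebra.comul (R := k) (A := H))
            (Coalgebra.counit (R := k) (A := H)) u n).subtype
          (corad (Coalgebra.comul (R := k) (A := H))
            (Coalgebra.counit (R := k) (A := H)) u n).subtype) := by
  have hu : IsGroupLikeElem k u := ⟨hεu, hΔu⟩
  refine ⟨self_mem_corad hu n, fun x hx => ?_⟩
  have hx₀ : deltaPow Coalgebra.comul (Coalgebra.counit (R := k)) u (n + 1) x = 0 := hx
  have hx₁ : deltaPow Coalgebra.comul (Coalgebra.counit (R := k)) u (n + 2) x = 0 :=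
    corad_le_corad_succ hu n hx
  apply TensorProduct.mem_range_map_subtype_ker_of_rTensor_of_lTensor
  · have := tpowSuccEquiv_symm_deltaPow_add_two_apply (R := k) u x n
    rwa [hx₁, hx₀, TensorProduct.zero_tmul, sub_zero, map_zero, eq_comm] at this
  · have := deltaPow_add_two_apply_eq_lTensor_sub (R := k) u x n
    rw [hx₁, hx₀, TensorProduct.tmul_zero] at this
    exact (sub_zero _).symm.trans this.symm
end
end

section
/- Let p be a prime and let m, r ∈ ℕ with r ≥ 1. The following are equivalent: (i) there exist positive integers k_1, k_2, …, k_r with m = k_1 + k_2 + ⋯ + k_r such that the multinomial coefficient m! / (k_1! k_2! ⋯ k_r!) is coprime to p; (ii) r ≤ L_p(m), where L_p(m) denotes the sum of the digits of m in base p. -/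
/-!
By Legendre's formula `(p - 1) v_p(n!) = n - L_p(n)`, so for `k₁ + ⋯ + k_r = m` the
multinomial coefficient satisfies `(p - 1) v_p(m! / ∏ kᵢ!) = ∑ L_p(kᵢ) - L_p(m)`: it is prime
to `p` exactly when the digit sums add up without carries. Since `L_p(kᵢ) ≥ 1` for `kᵢ > 0`, this
forces `r ≤ L_p(m)`. Conversely, subtracting `p ^ j`, where `j` is the position of the lowest
nonzero digit of `m`, lowers `L_p` by exactly one; doing this `r - 1` times gives a carry-free
decomposition into `r` positive parts.
-/

open Nat Finset

namespace Nat

theorem digits_sum_add_base_mul {b d : ℕ} (hb : 1 < b) (hd : d < b) (t : ℕ) :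
    (b.digits (d + b * t)).sum = d + (b.digits t).sum := by
  rcases eq_or_ne d 0 with rfl | hd0
  · rcases eq_or_ne t 0 with rfl | ht0
    · simp
    · rw [digits_add b hb 0 t hd (Or.inr ht0), List.sum_cons]
  · rw [digits_add b hb d t hd (Or.inl hd0), List.sum_cons]

theorem digits_sum_pos {b n : ℕ} (hn : n ≠ 0) : 0 < (b.digits n).sum :=
  Nat.pos_of_ne_zero (getLast_digit_ne_zero b hn) |>.trans_le
    (List.le_sum_of_mem (List.getLast_mem _))

theorem digits_sum_base_pow_mul {b : ℕ} (hb : 1 < b) (k m : ℕ) :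
    (b.digits (b ^ k * m)).sum = (b.digits m).sum := by
  rcases Nat.eq_zero_or_pos m with rfl | hm
  · simp
  · simp [digits_base_pow_mul hb hm]

theorem digits_sum_base_pow {b : ℕ} (hb : 1 < b) (k : ℕ) : (b.digits (b ^ k)).sum = 1 := by
  simpa [digits_of_lt b 1 one_ne_zero hb] using digits_sum_base_pow_mul hb k 1

theorem exists_base_pow_le_digits_sum_sub {b m : ℕ} (hb : 1 < b) (hm : m ≠ 0) :
    ∃ j, b ^ j ≤ m ∧ (b.digits (m - b ^ j)).sum + 1 = (b.digits m).sum := by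
  obtain ⟨j, n, hbn, rfl⟩ := exists_eq_pow_mul_and_not_dvd hm b hb.ne'
  have hd : n % b ≠ 0 := fun h => hbn (dvd_of_mod_eq_zero h)
  have hdb : n % b < b := mod_lt n (by omega)
  have hn : n = n % b + b * (n / b) := (mod_add_div n b).symm
  have hn1 : n - 1 = (n % b - 1) + b * (n / b) := by omega
  refine ⟨j, Nat.le_mul_of_pos_right _ (by omega), ?_⟩
  rw [← Nat.mul_sub_one, digits_sum_base_pow_mul hb, digits_sum_base_pow_mul hb, hn1,
    digits_sum_add_base_mul hb (by omega)]
  conv_rhs => rw [hn, digits_sum_add_base_mul hb hdb]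
  omega

theorem exists_fin_pos_sum_eq_digits_sum {b : ℕ} (hb : 1 < b) {r m : ℕ} (hr : 1 ≤ r)
    (hrm : r ≤ (b.digits m).sum) :
    ∃ k : Fin r → ℕ, (∀ i, 0 < k i) ∧ ∑ i, k i = m ∧
      ∑ i, (b.digits (k i)).sum = (b.digits m).sum := by
  induction r, hr using Nat.le_induction generalizing m with
  | base =>
    have hm : m ≠ 0 := by rintro rfl; simp at hrm
    exact ⟨fun _ => m, fun _ => Nat.pos_of_ne_zero hm, by simp, by simp⟩
  | succ r hr ih =>
    have hm : m ≠ 0 := by rintro rfl; simp at hrm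
    obtain ⟨j, hjm, hj⟩ := exists_base_pow_le_digits_sum_sub hb hm
    obtain ⟨k, hk_pos, hk_sum, hk_digits⟩ := ih (m := m - b ^ j) (by omega)
    refine ⟨Fin.cons (b ^ j) k, Fin.cases (pow_pos (zero_lt_one.trans hb) j) hk_pos, ?_, ?_⟩
    · simp only [Fin.sum_univ_succ, Fin.cons_zero, Fin.cons_succ, hk_sum]
      omega
    · simp only [Fin.sum_univ_succ, Fin.cons_zero, Fin.cons_succ, hk_digits,
        digits_sum_base_pow hb]
      omega

section padicValNat

variable {p : ℕ} [Fact p.Prime]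

theorem sub_one_mul_padicValNat_factorial_add_digits_sum (n : ℕ) :
    (p - 1) * padicValNat p n ! + (p.digits n).sum = n := by
  rw [sub_one_mul_padicValNat_factorial]
  exact Nat.sub_add_cancel (digit_sum_le p n)

theorem sub_one_mul_padicValNat_add_choose_add_digits_sum (a b : ℕ) :
    (p - 1) * padicValNat p ((a + b).choose b) + (p.digits (a + b)).sum =
      (p.digits a).sum + (p.digits b).sum := by
  have h := congrArg (padicValNat p) (add_choose_mul_factorial_mul_factorial a b)
  rw [padicValNat.mul (mul_ne_zero (choose_pos (Nat.le_add_left b a)).ne' (factorial_ne_zero a))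
    (factorial_ne_zero b), padicValNat.mul (choose_pos (Nat.le_add_left b a)).ne'
    (factorial_ne_zero a)] at h
  have ha := sub_one_mul_padicValNat_factorial_add_digits_sum (p := p) a
  have hb := sub_one_mul_padicValNat_factorial_add_digits_sum (p := p) b
  have hab := sub_one_mul_padicValNat_factorial_add_digits_sum (p := p) (a + b)
  rw [← h, Nat.mul_add, Nat.mul_add] at hab
  omega

theorem sub_one_mul_padicValNat_multinomial_add_digits_sum {α : Type*} (s : Finset α)
    (f : α → ℕ) :
    (p - 1) * padicValNat p (multinomial s f) + (p.digits (∑ i ∈ s, f i)).sum =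
      ∑ i ∈ s, (p.digits (f i)).sum := by
  induction s using Finset.cons_induction with
  | empty => simp
  | cons a s ha ih =>
    have hchoose :=
      sub_one_mul_padicValNat_add_choose_add_digits_sum (p := p) (∑ i ∈ s, f i) (f a)
    rw [multinomial_cons, padicValNat.mul (choose_pos (Nat.le_add_right _ _)).ne'
      (multinomial_pos s f).ne', sum_cons, sum_cons, add_comm (f a), Nat.mul_add]
    omega

theorem coprime_multinomial_iff_sum_digits_sum_eq {α : Type*} (s : Finset α) (f : α → ℕ) :
    Coprime (multinomial s f) p ↔
      ∑ i ∈ s, (p.digits (f i)).sum = (p.digits (∑ i ∈ s, f i)).sum := by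
  have hp : p.Prime := Fact.out
  rw [coprime_comm, hp.coprime_iff_not_dvd, ← sub_one_mul_padicValNat_multinomial_add_digits_sum,
    Nat.add_eq_right, Nat.mul_eq_zero, padicValNat.eq_zero_iff]
  simp [Nat.sub_ne_zero_of_lt hp.one_lt, hp.ne_one, (multinomial_pos s f).ne']

end padicValNat

end Nat

/-- Lucas-type characterization: for a prime `p` and `m, r ∈ ℕ` with `r ≥ 1`, there exist
positive integers `k₁, …, k_r` summing to `m` whose multinomial coefficient is coprime to `p`
if and only if `r ≤ L_p(m)`, the sum of the base-`p` digits of `m`. -/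
theorem stmt7 (p : ℕ) (hp : p.Prime) (m r : ℕ) (hr : 1 ≤ r) :
    (∃ k : Fin r → ℕ, (∀ i, 0 < k i) ∧ (∑ i, k i) = m ∧
      Nat.Coprime (Nat.multinomial Finset.univ k) p)
      ↔ r ≤ (Nat.digits p m).sum := by
  have := Fact.mk hp
  constructor
  · rintro ⟨k, hk_pos, rfl, hcop⟩
    rw [coprime_multinomial_iff_sum_digits_sum_eq] at hcop
    calc r = ∑ _i : Fin r, 1 := by simp
      _ ≤ ∑ i, (p.digits (k i)).sum := sum_le_sum fun i _ => digits_sum_pos (hk_pos i).ne'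
      _ = (p.digits (∑ i, k i)).sum := hcop
  · intro hrm
    obtain ⟨k, hk_pos, rfl, hk_digits⟩ := exists_fin_pos_sum_eq_digits_sum hp.one_lt hr hrm
    exact ⟨k, hk_pos, rfl, (coprime_multinomial_iff_sum_digits_sum_eq _ k).mpr hk_digits⟩
end

section
/- Let k be a commutative ring and n, m ∈ ℕ. Write F_r for the free group on generators x_1, …, x_r, and let k·gr^op(n,m) denote the free k-module on the set of group homomorphisms F_m → F_n. For 1 ≤ i ≤ n define homomorphisms α_i, β_i, γ_i : F_{n+1} → F_n on the generators y_1, …, y_{n+1} of F_{n+1} by: α_i(y_j) = x_j for j ≤ i, α_i(y_{i+1}) = x_i, α_i(y_j) = x_{j−1} for j ≥ i+2; β_i(y_j) = x_j for j ≤ i, β_i(y_{i+1}) = 1, β_i(y_j) = x_{j−1} for j ≥ i+2; γ_i(y_j) = x_j for j ≤ i−1, γ_i(y_i) = 1, γ_i(y_{i+1}) = x_i, γ_i(y_j) = x_{j−1} for j ≥ i+2. Let I(n,m) be the k-submodule of k·gr^op(n,m) spanned by the elements (α_i ∘ φ) − (β_i ∘ φ) − (γ_i ∘ φ) for all group homomorphisms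 φ : F_m → F_{n+1} and all 1 ≤ i ≤ n. Then k·gr^op(n,m) = I(n,m) + span(E), where E is the set of homomorphisms ρ : F_m → F_n such that each ρ(y_i) is a positive word in the generators x_1, …, x_n (a product of generators with no inverses, possibly empty) and each generator x_j (1 ≤ j ≤ n) occurs exactly once in the concatenation ρ(y_1)ρ(y_2)⋯ρ(y_m). Equivalently, the composite Cat_{Ass^u}(n,m) → k·gr^op(n,m) → k·gr^op(n,m)/I(n,m) is surjective. -/
noncomputable section

universe u

open scoped Classical

namespace Stmt18

variable (k : Type u) [CommRing k]

/-- `x j`, the `j`-th generator of the free group `F_r`. -/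
abbrev gen {r : ℕ} (j : Fin r) : FreeGroup (Fin r) := FreeGroup.of j

variable (n : ℕ)

/-- `α_i : F_{n+1} → F_n`, sending `y_j ↦ x_j` for `j ≤ i`, `y_{i+1} ↦ x_i` and
`y_j ↦ x_{j−1}` for `j ≥ i + 2` (0-indexed version of the statement). -/
def alphaMap (i : Fin n) : FreeGroup (Fin (n + 1)) →* FreeGroup (Fin n) :=
  FreeGroup.lift fun j : Fin (n + 1) =>
    if h : (j : ℕ) ≤ (i : ℕ) then gen ⟨(j : ℕ), lt_of_le_of_lt h i.isLt⟩
    else if (j : ℕ) = (i : ℕ) + 1 then gen i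
    else gen ⟨(j : ℕ) - 1, by omega⟩

/-- `β_i : F_{n+1} → F_n`, as `α_i` but `y_{i+1} ↦ 1`. -/
def betaMap (i : Fin n) : FreeGroup (Fin (n + 1)) →* FreeGroup (Fin n) :=
  FreeGroup.lift fun j : Fin (n + 1) =>
    if h : (j : ℕ) ≤ (i : ℕ) then gen ⟨(j : ℕ), lt_of_le_of_lt h i.isLt⟩
    else if (j : ℕ) = (i : ℕ) + 1 then 1
    else gen ⟨(j : ℕ) - 1, by omega⟩

/-- `γ_i : F_{n+1} → F_n`, sending `y_j ↦ x_j` for `j < i`, `y_i ↦ 1`, `y_{i+1} ↦ x_i` and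
`y_j ↦ x_{j−1}` for `j ≥ i + 2` (0-indexed version of the statement). -/
def gammaMap (i : Fin n) : FreeGroup (Fin (n + 1)) →* FreeGroup (Fin n) :=
  FreeGroup.lift fun j : Fin (n + 1) =>
    if h : (j : ℕ) < (i : ℕ) then gen ⟨(j : ℕ), lt_trans h i.isLt⟩
    else if (j : ℕ) = (i : ℕ) then 1
    else if (j : ℕ) = (i : ℕ) + 1 then gen i
    else gen ⟨(j : ℕ) - 1, by omega⟩

variable (m : ℕ)

/-- The submodule `I(n,m)` of the free `k`-module on `gr^op(n,m) = Hom(F_m, F_n)`, spanned by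
the elements `(α_i ∘ φ) − (β_i ∘ φ) − (γ_i ∘ φ)`. -/
def idealI : Submodule k ((FreeGroup (Fin m) →* FreeGroup (Fin n)) →₀ k) :=
  Submodule.span k
    {v | ∃ (φ : FreeGroup (Fin m) →* FreeGroup (Fin (n + 1))) (i : Fin n),
      v = Finsupp.single ((alphaMap n i).comp φ) (1 : k)
        - Finsupp.single ((betaMap n i).comp φ) (1 : k)
        - Finsupp.single ((gammaMap n i).comp φ) (1 : k)}

/-- The set `E` of homomorphisms `ρ : F_m → F_n` such that each `ρ(y_i)` is a positive word
in the generators and each generator occurs exactly once in the concatenation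
`ρ(y_1)⋯ρ(y_m)`. -/
def setE : Set (FreeGroup (Fin m) →* FreeGroup (Fin n)) :=
  {ρ | ∃ w : Fin m → List (Fin n),
    (∀ i : Fin m, ρ (FreeGroup.of i) = ((w i).map FreeGroup.of).prod) ∧
    (List.ofFn w).flatten.Perm (List.finRange n)}

/-!
Represent `ρ : F_m → F_n` by words `ρ(y_j)` and induct on their total weight, where a letter
`x_a` weighs 1 and `x_a⁻¹` weighs 2. Splitting the generator `x_a` into `y_a, y_{a+1}` along a
lift `φ : F_m → F_{n+1}` gives `[α_a φ] ≡ [β_a φ] + [γ_a φ]` modulo `I`, and `β_a`, `γ_a` erase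
`y_{a+1}`, resp. `y_a`. If `x_a` does not occur in `ρ`, lifting through the inclusion that misses
`y_{a+1}` gives `[ρ] ≡ 2[ρ]`. Otherwise pick an occurrence of `x_a^{±1}`; lifting it to `y_{a+1}`
and the other occurrences to `y_a` if it is positive, or lifting it to `y_a y_{a+1}⁻¹` and the
others to `y_{a+1}` if it is inverse, expresses `[ρ]` through `ρ` with that letter deleted and `ρ`
with all other occurrences of `x_a` deleted and that one made positive. Both are lighter unless
`x_a` occurs exactly once, positively. When this holds for every `a`, `ρ` lies in `E`.
-/

open FreeGroup

lemma MonoidHom.comp_freeGroupLift {α G H : Type*} [Group G] [Group H] (ψ : G →* H)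
    (f : α → G) : ψ.comp (lift f) = lift (ψ ∘ f) := by
  ext; simp

section Words

variable {ι α : Type*}

def eraseGen [DecidableEq α] (a : α) : FreeGroup α →* FreeGroup α :=
  lift fun b => if b = a then 1 else of b

lemma eraseGen_mk [DecidableEq α] (a : α) (L : List (α × Bool)) :
    eraseGen a (mk L) = mk (L.filter (·.1 ≠ a)) := by
  rw [eraseGen, lift_mk, ← lift_of_apply (mk _), lift_mk]
  induction L with
  | nil => rfl
  | cons x L ih =>
    obtain ⟨b, s⟩ := x
    by_cases hb : b = a <;> cases s <;> simp [hb, ih]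

def homOfWords (w : ι → List (α × Bool)) : FreeGroup ι →* FreeGroup α :=
  lift (mk ∘ w)

lemma homOfWords_toWord [DecidableEq α] (ρ : FreeGroup ι →* FreeGroup α) :
    homOfWords (fun j => (ρ (of j)).toWord) = ρ := by
  ext; simp [homOfWords, mk_toWord]

lemma mk_eq_prod_map_of {L : List (α × Bool)} (hL : ∀ x ∈ L, x.2 = true) :
    mk L = ((L.map Prod.fst).map of).prod := by
  rw [← lift_of_apply (mk L), lift_mk, List.map_map]
  congr 1
  exact List.map_congr_left fun x hx => by simp [hL x hx]

end Words

lemma predAbove_succ_succAbove {n : ℕ} (i a : Fin n) : i.predAbove (i.succ.succAbove a) = a := by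
  rcases le_or_gt a i with h | h
  · rw [Fin.succAbove_of_castSucc_lt _ _ (Fin.castSucc_lt_succ_iff.mpr h),
      Fin.predAbove_castSucc_of_le _ _ h]
  · rw [Fin.succAbove_of_le_castSucc _ _ (Fin.succ_le_castSucc_iff.mpr h),
      Fin.predAbove_succ_of_le _ _ h.le]

section Degeneracies

variable {n}

lemma alphaMap_eq_map (i : Fin n) : alphaMap n i = map i.predAbove := by
  ext j
  rw [alphaMap, lift_apply_of, map.of]
  rcases lt_or_ge i.castSucc j with h | h
  · rw [Fin.predAbove_of_castSucc_lt _ _ h]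
    rw [Fin.lt_def, Fin.val_castSucc] at h
    split_ifs <;> simp only [gen, of_injective.eq_iff, Fin.ext_iff, Fin.val_pred] <;> omega
  · rw [Fin.predAbove_of_le_castSucc _ _ h, dif_pos (by simpa [Fin.le_def] using h)]
    rfl

lemma betaMap_of (i : Fin n) (j : Fin (n + 1)) :
    betaMap n i (of j) = if j = i.succ then 1 else alphaMap n i (of j) := by
  rw [betaMap, alphaMap, lift_apply_of, lift_apply_of]
  split_ifs <;> simp_all [Fin.ext_iff]
  omega

lemma gammaMap_of (i : Fin n) (j : Fin (n + 1)) :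
    gammaMap n i (of j) = if j = i.castSucc then 1 else alphaMap n i (of j) := by
  rw [gammaMap, alphaMap, lift_apply_of, lift_apply_of]
  split_ifs <;> simp_all [Fin.ext_iff] <;> omega

@[simp] lemma alphaMap_of (i : Fin n) (j : Fin (n + 1)) :
    alphaMap n i (of j) = of (i.predAbove j) := by
  rw [alphaMap_eq_map, map.of]

@[simp] lemma alphaMap_map_succAbove_succ (i : Fin n) (g : FreeGroup (Fin n)) :
    alphaMap n i (map i.succ.succAbove g) = g := by
  rw [alphaMap_eq_map, map.comp, Function.comp_def]
  simp [predAbove_succ_succAbove]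

@[simp] lemma alphaMap_map_succAbove_castSucc (i : Fin n) (g : FreeGroup (Fin n)) :
    alphaMap n i (map i.castSucc.succAbove g) = g := by
  rw [alphaMap_eq_map, map.comp, Function.comp_def]
  simp [Fin.predAbove_succAbove]

@[simp] lemma betaMap_map_succAbove_succ (i : Fin n) (g : FreeGroup (Fin n)) :
    betaMap n i (map i.succ.succAbove g) = g := by
  refine DFunLike.congr_fun (?_ : (betaMap n i).comp (map i.succ.succAbove) = .id _) g
  ext a
  simp [betaMap_of, Fin.succAbove_ne, predAbove_succ_succAbove]

@[simp] lemma betaMap_map_succAbove_castSucc (i : Fin n) (g : FreeGroup (Fin n)) :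
    betaMap n i (map i.castSucc.succAbove g) = eraseGen i g := by
  refine DFunLike.congr_fun (?_ : (betaMap n i).comp (map i.castSucc.succAbove) = eraseGen i) g
  ext a
  have h : i.castSucc.succAbove a = i.succ ↔ a = i := by
    rw [← Fin.succAbove_castSucc_self, Fin.succAbove_right_inj]
  by_cases ha : a = i <;> simp [betaMap_of, eraseGen, h, ha, Fin.predAbove_succAbove]

@[simp] lemma gammaMap_map_succAbove_castSucc (i : Fin n) (g : FreeGroup (Fin n)) :
    gammaMap n i (map i.castSucc.succAbove g) = g := by
  refine DFunLike.congr_fun (?_ : (gammaMap n i).comp (map i.castSucc.succAbove) = .id _) g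
  ext a
  simp [gammaMap_of, Fin.succAbove_ne, Fin.predAbove_succAbove]

@[simp] lemma gammaMap_map_succAbove_succ (i : Fin n) (g : FreeGroup (Fin n)) :
    gammaMap n i (map i.succ.succAbove g) = eraseGen i g := by
  refine DFunLike.congr_fun (?_ : (gammaMap n i).comp (map i.succ.succAbove) = eraseGen i) g
  ext a
  have h : i.succ.succAbove a = i.castSucc ↔ a = i := by
    rw [← Fin.succAbove_succ_self, Fin.succAbove_right_inj]
  by_cases ha : a = i <;> simp [gammaMap_of, eraseGen, h, ha, predAbove_succ_succAbove]

@[simp] lemma betaMap_of_succ (i : Fin n) : betaMap n i (of i.succ) = 1 := by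
  simp [betaMap_of]

@[simp] lemma betaMap_of_castSucc (i : Fin n) : betaMap n i (of i.castSucc) = of i := by
  simp [betaMap_of, Fin.ext_iff]

@[simp] lemma gammaMap_of_castSucc (i : Fin n) : gammaMap n i (of i.castSucc) = 1 := by
  simp [gammaMap_of]

@[simp] lemma gammaMap_of_succ (i : Fin n) : gammaMap n i (of i.succ) = of i := by
  simp [gammaMap_of, Fin.ext_iff]

end Degeneracies

section Relations

variable {k n m}

lemma relation_mem_idealI (φ : FreeGroup (Fin m) →* FreeGroup (Fin (n + 1))) (i : Fin n) :
    Finsupp.single ((alphaMap n i).comp φ) (1 : k)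
      - Finsupp.single ((betaMap n i).comp φ) 1
      - Finsupp.single ((gammaMap n i).comp φ) 1 ∈ idealI k n m :=
  Submodule.subset_span ⟨φ, i, rfl⟩

lemma single_lift_eraseGen_mem_idealI (a : Fin n) (f : Fin m → FreeGroup (Fin n)) :
    Finsupp.single (lift (eraseGen a ∘ f)) (1 : k) ∈ idealI k n m := by
  have h := relation_mem_idealI (k := k) (lift (map a.succ.succAbove ∘ f)) a
  simpa [MonoidHom.comp_freeGroupLift, Function.comp_def] using neg_mem h

lemma single_sub_sub_mem_idealI_of_eq_mul_of_mul {f : Fin m → FreeGroup (Fin n)} {j : Fin m}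
    {a : Fin n} {U V : FreeGroup (Fin n)} (hf : f j = U * of a * V) :
    Finsupp.single (lift f) (1 : k)
      - Finsupp.single (lift (Function.update f j (U * V))) 1
      - Finsupp.single (lift (Function.update (eraseGen a ∘ f) j
          (eraseGen a U * of a * eraseGen a V))) 1 ∈ idealI k n m := by
  have h := relation_mem_idealI (k := k) (lift (Function.update (map a.succ.succAbove ∘ f) j
    (map a.succ.succAbove U * of a.succ * map a.succ.succAbove V))) a
  simp only [MonoidHom.comp_freeGroupLift, Function.comp_update] at h
  simpa [Function.comp_def, ← hf] using h

lemma single_sub_sub_mem_idealI_of_eq_mul_inv_mul {f : Fin m → FreeGroup (Fin n)} {j : Fin m}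
    {a : Fin n} {U V : FreeGroup (Fin n)} (hf : f j = U * (of a)⁻¹ * V) :
    Finsupp.single (lift (Function.update f j (U * V))) (1 : k)
      - Finsupp.single (lift (Function.update (eraseGen a ∘ f) j
          (eraseGen a U * of a * eraseGen a V))) 1
      - Finsupp.single (lift f) 1 ∈ idealI k n m := by
  have h := relation_mem_idealI (k := k) (lift (Function.update (map a.castSucc.succAbove ∘ f) j
    (map a.castSucc.succAbove U * (of a.castSucc * (of a.succ)⁻¹) * map a.castSucc.succAbove V))) a
  simp only [MonoidHom.comp_freeGroupLift, Function.comp_update] at h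
  simpa [Function.comp_def, ← hf] using h

end Relations

section Weights

variable {ι α : Type*}

-- An inverse letter weighs 2, so that making a letter positive lowers the weight.
def wordWeight (L : List (α × Bool)) : ℕ :=
  (L.map fun x => bif x.2 then 1 else 2).sum

@[simp] lemma wordWeight_nil : wordWeight ([] : List (α × Bool)) = 0 := rfl

@[simp] lemma wordWeight_cons (x : α × Bool) (L : List (α × Bool)) :
    wordWeight (x :: L) = (bif x.2 then 1 else 2) + wordWeight L := by
  simp [wordWeight]

@[simp] lemma wordWeight_append (L L' : List (α × Bool)) :
    wordWeight (L ++ L') = wordWeight L + wordWeight L' := by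
  simp [wordWeight]

lemma wordWeight_eq_zero_iff {L : List (α × Bool)} : wordWeight L = 0 ↔ L = [] := by
  cases L with
  | nil => simp
  | cons x L => obtain ⟨a, _ | _⟩ := x <;> simp

lemma wordWeight_eq_one_iff {L : List (α × Bool)} : wordWeight L = 1 ↔ ∃ a, L = [(a, true)] := by
  cases L with
  | nil => simp
  | cons x L =>
    obtain ⟨a, _ | _⟩ := x
    · simp
      omega
    · simp [wordWeight_eq_zero_iff]

lemma wordWeight_filter_ne_add_filter_eq [DecidableEq α] (a : α) (L : List (α × Bool)) :
    wordWeight (L.filter (·.1 ≠ a)) + wordWeight (L.filter (·.1 = a)) = wordWeight L := by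
  induction L with
  | nil => rfl
  | cons x L ih => by_cases hx : x.1 = a <;> simp [hx] at ih ⊢ <;> omega

variable [Fintype ι]

def tupleWeight (w : ι → List (α × Bool)) : ℕ := ∑ j, wordWeight (w j)

def genWeight [DecidableEq α] (a : α) (w : ι → List (α × Bool)) : ℕ :=
  ∑ j, wordWeight ((w j).filter (·.1 = a))

lemma tupleWeight_update_add [DecidableEq ι] (w : ι → List (α × Bool)) (j : ι)
    (L : List (α × Bool)) :
    tupleWeight (Function.update w j L) + wordWeight (w j) = tupleWeight w + wordWeight L := by
  rw [tupleWeight, tupleWeight, ← Finset.add_sum_erase _ _ (Finset.mem_univ j),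
    ← Finset.add_sum_erase _ (fun i => wordWeight (w i)) (Finset.mem_univ j), Function.update_self,
    Finset.sum_congr rfl fun i hi => by rw [Function.update_of_ne (Finset.ne_of_mem_erase hi)]]
  ring

lemma tupleWeight_update_lt [DecidableEq ι] {w : ι → List (α × Bool)} {j : ι}
    {u v : List (α × Bool)} {x : α × Bool} (hw : w j = u ++ x :: v) :
    tupleWeight (Function.update w j (u ++ v)) < tupleWeight w := by
  have h := tupleWeight_update_add w j (u ++ v)
  rw [hw] at h
  obtain ⟨a, _ | _⟩ := x <;> simp at h <;> omega

lemma tupleWeight_update_filter_add_genWeight [DecidableEq ι] [DecidableEq α]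
    {w : ι → List (α × Bool)} {j : ι} {u v : List (α × Bool)} {a : α} {b : Bool}
    (hw : w j = u ++ (a, b) :: v) :
    tupleWeight (Function.update (fun i => (w i).filter (·.1 ≠ a)) j
        (u.filter (·.1 ≠ a) ++ (a, true) :: v.filter (·.1 ≠ a))) + genWeight a w
      = tupleWeight w + 1 := by
  have h := tupleWeight_update_add (fun i => (w i).filter (·.1 ≠ a)) j
    (u.filter (·.1 ≠ a) ++ (a, true) :: v.filter (·.1 ≠ a))
  have hsplit : tupleWeight (fun i => (w i).filter (·.1 ≠ a)) + genWeight a w = tupleWeight w := by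
    simp only [tupleWeight, genWeight, ← Finset.sum_add_distrib, wordWeight_filter_ne_add_filter_eq]
  have hj : (w j).filter (·.1 ≠ a) = u.filter (·.1 ≠ a) ++ v.filter (·.1 ≠ a) := by simp [hw]
  rw [hj, wordWeight_append, wordWeight_append, wordWeight_cons, cond_true] at h
  omega

lemma genWeight_eq_zero_iff [DecidableEq α] {a : α} {w : ι → List (α × Bool)} :
    genWeight a w = 0 ↔ ∀ j, ∀ x ∈ w j, x.1 ≠ a := by
  simp [genWeight, wordWeight_eq_zero_iff, List.filter_eq_nil_iff]

lemma genWeight_eq_wordWeight_filter_flatten [DecidableEq α] (a : α) {m : ℕ}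
    (w : Fin m → List (α × Bool)) :
    genWeight a w = wordWeight (((List.ofFn w).flatten).filter (·.1 = a)) := by
  rw [genWeight, List.filter_flatten, wordWeight, List.map_flatten, List.sum_flatten]
  simp [List.map_ofFn, List.sum_ofFn, wordWeight]

end Weights

section Reduction

variable {k n m}

lemma homOfWords_mem_setE {w : Fin m → List (Fin n × Bool)} (hw : ∀ a, genWeight a w = 1) :
    homOfWords w ∈ setE n m := by
  set F := (List.ofFn w).flatten
  have hF : ∀ a, F.filter (·.1 = a) = [(a, true)] := by
    intro a
    obtain ⟨a', ha'⟩ := wordWeight_eq_one_iff.mp (genWeight_eq_wordWeight_filter_flatten a w ▸ hw a)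
    have hmem : (a', true) ∈ F.filter (·.1 = a) := ha' ▸ List.mem_singleton_self _
    obtain rfl : a' = a := by simpa using (List.mem_filter.mp hmem).2
    exact ha'
  have hpos : ∀ j, ∀ x ∈ w j, x.2 = true := fun j x hx => by
    have hxF : x ∈ F.filter (·.1 = x.1) :=
      List.mem_filter.mpr ⟨List.mem_flatten.mpr ⟨w j, List.mem_ofFn.mpr ⟨j, rfl⟩, hx⟩, by simp⟩
    rw [hF] at hxF
    rw [List.mem_singleton.mp hxF]
  refine ⟨fun j => (w j).map Prod.fst, fun j => ?_, ?_⟩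
  · simp [homOfWords, mk_eq_prod_map_of (hpos j)]
  · rw [List.perm_iff_count]
    intro a
    have hmap : (List.ofFn fun j => (w j).map Prod.fst) =
        (List.ofFn w).map (List.map Prod.fst) := by
      rw [List.map_ofFn]; rfl
    rw [List.count_finRange, hmap, ← List.map_flatten, List.count, List.countP_map,
      List.countP_eq_length_filter]
    have hpred : ((· == a) ∘ Prod.fst : Fin n × Bool → Bool) = fun x => decide (x.1 = a) := by
      funext x
      by_cases h : x.1 = a <;> simp [h]
    rw [hpred, hF a, List.length_singleton]

lemma single_homOfWords_mem_idealI_of_genWeight_eq_zero {w : Fin m → List (Fin n × Bool)}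
    {a : Fin n} (ha : genWeight a w = 0) :
    Finsupp.single (homOfWords w) (1 : k) ∈ idealI k n m := by
  have h : eraseGen a ∘ mk ∘ w = mk ∘ w := by
    funext j
    simp only [Function.comp_apply, eraseGen_mk, List.filter_eq_self.mpr
      (fun x hx => decide_eq_true (genWeight_eq_zero_iff.mp ha j x hx))]
  simpa [homOfWords, h] using single_lift_eraseGen_mem_idealI (k := k) a (mk ∘ w)

lemma single_homOfWords_mem_of_split
    {M : Submodule k ((FreeGroup (Fin m) →* FreeGroup (Fin n)) →₀ k)} (hM : idealI k n m ≤ M)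
    {w : Fin m → List (Fin n × Bool)} {j : Fin m}
    {u v : List (Fin n × Bool)} {a : Fin n} {b : Bool} (hw : w j = u ++ (a, b) :: v)
    (h₁ : Finsupp.single (homOfWords (Function.update w j (u ++ v))) 1 ∈ M)
    (h₂ : Finsupp.single (homOfWords (Function.update (fun i => (w i).filter (·.1 ≠ a)) j
      (u.filter (·.1 ≠ a) ++ (a, true) :: v.filter (·.1 ≠ a)))) 1 ∈ M) :
    Finsupp.single (homOfWords w) 1 ∈ M := by
  have e₁ : homOfWords (Function.update w j (u ++ v)) =
      lift (Function.update (mk ∘ w) j (mk u * mk v)) := by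
    rw [homOfWords, Function.comp_update, mul_mk]
  have e₂ : homOfWords (Function.update (fun i => (w i).filter (·.1 ≠ a)) j
      (u.filter (·.1 ≠ a) ++ (a, true) :: v.filter (·.1 ≠ a))) =
      lift (Function.update (eraseGen a ∘ mk ∘ w) j
        (eraseGen a (mk u) * of a * eraseGen a (mk v))) := by
    rw [homOfWords, Function.comp_update]
    simp only [Function.comp_def, eraseGen_mk, of, mul_mk, List.singleton_append, List.append_assoc]
  change Finsupp.single (lift (mk ∘ w)) 1 ∈ M
  rw [e₁] at h₁
  rw [e₂] at h₂
  cases b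
  · have hf : (mk ∘ w) j = mk u * (of a)⁻¹ * mk v := by
      rw [Function.comp_apply, hw, of, inv_mk, mul_mk, mul_mk]; simp [invRev]
    have h := hM (single_sub_sub_mem_idealI_of_eq_mul_inv_mul (k := k) hf)
    simpa only [sub_sub_cancel] using sub_mem (sub_mem h₁ h₂) h
  · have hf : (mk ∘ w) j = mk u * of a * mk v := by
      rw [Function.comp_apply, hw, of, mul_mk, mul_mk]; simp
    have h := hM (single_sub_sub_mem_idealI_of_eq_mul_of_mul (k := k) hf)
    simpa only [sub_add_cancel] using add_mem (add_mem h h₂) h₁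

theorem single_homOfWords_mem_sup (w : Fin m → List (Fin n × Bool)) :
    Finsupp.single (homOfWords w) (1 : k) ∈ idealI k n m ⊔
      Submodule.span k ((fun ρ => Finsupp.single ρ (1 : k)) '' setE n m) := by
  induction hN : tupleWeight w using Nat.strong_induction_on generalizing w with
  | _ N ih =>
  subst hN
  by_cases hE : ∀ a, genWeight a w = 1
  · exact Submodule.mem_sup_right (Submodule.subset_span ⟨_, homOfWords_mem_setE hE, rfl⟩)
  obtain ⟨a, ha⟩ := not_forall.mp hE
  by_cases h0 : genWeight a w = 0
  · exact Submodule.mem_sup_left (single_homOfWords_mem_idealI_of_genWeight_eq_zero h0)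
  obtain ⟨j, b, hx⟩ : ∃ j b, (a, b) ∈ w j := by
    by_contra! h
    exact h0 (genWeight_eq_zero_iff.mpr fun j ⟨_, b⟩ hx hxa => h j b (hxa ▸ hx))
  obtain ⟨u, v, hw⟩ := List.append_of_mem hx
  refine single_homOfWords_mem_of_split le_sup_left hw (ih _ ?_ _ rfl) (ih _ ?_ _ rfl)
  · exact tupleWeight_update_lt hw
  · have := tupleWeight_update_filter_add_genWeight hw
    omega

end Reduction

/-- Every element of `k·gr^op(n,m)` is, modulo the left ideal `I(n,m)`, a `k`-linear
combination of homomorphisms sending the generators to positive words in which each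
generator occurs exactly once; i.e. `k·gr^op(n,m) = I(n,m) + span(E)`. -/
theorem stmt18 :
    idealI k n m ⊔ Submodule.span k
      ((fun ρ : FreeGroup (Fin m) →* FreeGroup (Fin n) => Finsupp.single ρ (1 : k)) '' setE n m)
      = ⊤ := by
  rw [eq_top_iff, ← Finsupp.basisSingleOne.span_eq, Submodule.span_le]
  rintro _ ⟨ρ, rfl⟩
  rw [Finsupp.coe_basisSingleOne, ← homOfWords_toWord ρ]
  exact single_homOfWords_mem_sup _

end Stmt18
end
end
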